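/- arXiv:2204.08729 — 3 statements merged into one kernel-verified Lean document; each statement's English description precedes it below -/
import Mathlib

section
/- Let a ∈ ℝ, β ∈ ℝ, and consider τ(t) = (arctan((1/a)√(t²−a²)) + β) / √(t²−a²) for t > |a| (a ≠ 0). Then τ is differentiable and its derivative satisfies dτ/dt(t) = (t/(t²−a²)) · (a/t² − τ(t)). -/
theorem stmt_11 (a β : ℝ) (ha : a ≠ 0) :
    ∀ t : ℝ, |a| < t →
      HasDerivAt
        (fun t : ℝ => (Real.arctan ((1 / a) * Real.sqrt (t ^ 2 - a ^ 2)) + β) /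
          Real.sqrt (t ^ 2 - a ^ 2))
        ((t / (t ^ 2 - a ^ 2)) *
          (a / t ^ 2 -
            (Real.arctan ((1 / a) * Real.sqrt (t ^ 2 - a ^ 2)) + β) /
              Real.sqrt (t ^ 2 - a ^ 2))) t := by
  intro t ht
  have ht0 : 0 < t := lt_of_le_of_lt (abs_nonneg a) ht
  have hpos : (0:ℝ) < t ^ 2 - a ^ 2 := by
    nlinarith [sq_abs a, abs_nonneg a, ht]
  have hne : t ^ 2 - a ^ 2 ≠ 0 := ne_of_gt hpos
  set u := Real.sqrt (t ^ 2 - a ^ 2) with hu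
  have hu0 : 0 < u := Real.sqrt_pos.mpr hpos
  have hune : u ≠ 0 := ne_of_gt hu0
  have hu2 : u ^ 2 = t ^ 2 - a ^ 2 := Real.sq_sqrt hpos.le
  have hsq : HasDerivAt (fun t : ℝ => t ^ 2 - a ^ 2) (2 * t) t := by
    simpa using (hasDerivAt_pow 2 t).sub_const (a ^ 2)
  have hsqrt : HasDerivAt (fun t : ℝ => Real.sqrt (t ^ 2 - a ^ 2))
      (2 * t / (2 * u)) t := hsq.sqrt hne
  have harg : HasDerivAt (fun t : ℝ => (1 / a) * Real.sqrt (t ^ 2 - a ^ 2))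
      ((1 / a) * (2 * t / (2 * u))) t := hsqrt.const_mul (1 / a)
  have harctan : HasDerivAt
      (fun t : ℝ => Real.arctan ((1 / a) * Real.sqrt (t ^ 2 - a ^ 2)) + β)
      (1 / (1 + ((1 / a) * u) ^ 2) * ((1 / a) * (2 * t / (2 * u)))) t :=
    (harg.arctan).add_const β
  have hdiv := harctan.div hsqrt hune
  refine hdiv.congr_deriv ?_
  have h1a : (1 : ℝ) + ((1 / a) * u) ^ 2 = t ^ 2 / a ^ 2 := by
    field_simp
    nlinarith [hu2]
  rw [h1a]
  have htne : t ≠ 0 := ne_of_gt ht0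
  rw [← hu]
  field_simp
  rw [hu2]
  ring
end

section
/- Let τ > 0 and η ∈ ℂ with η ≠ 0. Then all roots s of s − ηe^{−sτ} = 0 lie in the open left half-plane Re(s) < 0 if and only if η belongs to the open region Λ_{τ,0} = {η ≠ 0 : Re η < 0, |η| < π/(2τ), |Arg η| > τ|η| + π/2}. -/
open Complex Real

lemma arg_polar {r φ : ℝ} (hr : 0 < r) (hφ : φ ∈ Set.Ioc (-π) π) :
    Complex.arg ((r : ℂ) * Complex.exp (φ * I)) = φ := by
  rw [Complex.arg_real_mul _ hr, Complex.exp_mul_I]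
  exact Complex.arg_cos_add_sin_mul_I hφ

lemma mul_exp_polar (l : ℂ) :
    l * Complex.exp l = ((‖l‖ * Real.exp l.re : ℝ) : ℂ) *
      Complex.exp ((l.arg + l.im : ℝ) * I) := by
  have h2 : Complex.exp l = (Real.exp l.re : ℂ) * Complex.exp (l.im * I) := by
    rw [Complex.ofReal_exp, ← Complex.exp_add, Complex.re_add_im]
  nth_rewrite 1 [← Complex.norm_mul_exp_arg_mul_I l]
  rw [h2]
  rw [show ((l.arg + l.im : ℝ) : ℂ) * I = l.arg * I + l.im * I by push_cast; ring,
    Complex.exp_add]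
  push_cast
  ring


lemma exists_rhp_root_polar {r θ : ℝ} (hr : 0 < r) (hθ0 : 0 ≤ θ) (hθπ : θ ≤ π)
    (hθ : θ ≤ r + π / 2) :
    ∃ l : ℂ, 0 ≤ l.re ∧ l * Complex.exp l = (r : ℂ) * Complex.exp ((θ : ℝ) * I) := by
  -- Step 1: x₀ with x₀ e^{x₀} = r
  have hf : Continuous fun x : ℝ => x * Real.exp x := continuous_id.mul Real.continuous_exp
  have hsub := intermediate_value_Icc (le_of_lt hr) hf.continuousOn
  have hrin : r ∈ Set.Icc ((fun x : ℝ => x * Real.exp x) 0) ((fun x : ℝ => x * Real.exp x) r) := by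
    simp only [Set.mem_Icc]
    refine ⟨by simp [hr.le], ?_⟩
    nth_rewrite 1 [← mul_one r]
    exact mul_le_mul_of_nonneg_left (Real.one_le_exp hr.le) hr.le
  obtain ⟨x₀, hx₀mem, hx₀⟩ := hsub hrin
  simp only at hx₀
  have hx₀0 : 0 ≤ x₀ := hx₀mem.1
  have hx₀pos : 0 < x₀ := by
    rcases hx₀0.eq_or_lt with h | h
    · exfalso; rw [← h] at hx₀; simp at hx₀; linarith
    · exact h
  -- Step 2: the curve
  set Y : ℝ → ℝ := fun x => Real.sqrt (r ^ 2 * Real.exp (-(2 * x)) - x ^ 2) with hYdef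
  have hsq : ∀ x, (Real.exp (-x)) ^ 2 = Real.exp (-(2 * x)) := by
    intro x
    rw [pow_two, ← Real.exp_add]
    ring_nf
  have hkey : ∀ x ∈ Set.Icc 0 x₀, x ^ 2 ≤ r ^ 2 * Real.exp (-(2 * x)) := by
    intro x hx
    have h1 : x * Real.exp x ≤ r := by
      rw [← hx₀]
      exact mul_le_mul hx.2 (Real.exp_le_exp.mpr hx.2) (Real.exp_pos x).le hx₀0
    have h2 : x ≤ r * Real.exp (-x) := by
      rw [Real.exp_neg, ← div_eq_mul_inv, le_div_iff₀ (Real.exp_pos x)]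
      exact h1
    have h3 : x ^ 2 ≤ (r * Real.exp (-x)) ^ 2 := by
      apply sq_le_sq' _ h2
      nlinarith [Real.exp_pos (-x), hx.1]
    calc x ^ 2 ≤ (r * Real.exp (-x)) ^ 2 := h3
      _ = r ^ 2 * Real.exp (-(2 * x)) := by rw [mul_pow, hsq]
  have hY0 : Y 0 = r := by
    simp only [hYdef]
    norm_num
    exact Real.sqrt_sq hr.le
  have hYx₀ : Y x₀ = 0 := by
    have h2 : x₀ = r * Real.exp (-x₀) := by
      rw [Real.exp_neg, ← div_eq_mul_inv, eq_div_iff (Real.exp_pos x₀).ne']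
      linarith [hx₀]
    have : r ^ 2 * Real.exp (-(2 * x₀)) - x₀ ^ 2 = 0 := by
      rw [← hsq, ← mul_pow, ← h2]
      ring
    simp only [hYdef, this, Real.sqrt_zero]
  have hYcont : Continuous Y := by
    apply Continuous.sqrt
    continuity
  -- Step 3: the angle function
  set G : ℝ → ℝ := fun x => Complex.arg ((x : ℂ) + (Y x : ℝ) * I) + Y x with hGdef
  have hPcont : Continuous fun x : ℝ => (x : ℂ) + (Y x : ℝ) * I := by
    apply Continuous.add Complex.continuous_ofReal
    exact (Complex.continuous_ofReal.comp hYcont).mul continuous_const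
  have hGcont : ContinuousOn G (Set.Icc 0 x₀) := by
    intro x hx
    apply ContinuousAt.continuousWithinAt
    have hp : ((x : ℂ) + (Y x : ℝ) * I) ∈ Complex.slitPlane := by
      rw [Complex.mem_slitPlane_iff]
      simp only [Complex.add_re, Complex.ofReal_re, Complex.mul_re, Complex.ofReal_im,
        Complex.I_re, Complex.I_im, Complex.add_im, Complex.mul_im]
      rcases hx.1.eq_or_lt with h | h
      · right
        rw [← h, hY0]
        simpa using hr.ne'
      · left
        simpa using h
    have h1 : ContinuousAt (fun y : ℝ => Complex.arg ((y : ℂ) + (Y y : ℝ) * I)) x :=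
      ContinuousAt.comp (f := fun y : ℝ => (y : ℂ) + (Y y : ℝ) * I) (x := x)
        (Complex.continuousAt_arg hp) hPcont.continuousAt
    exact h1.add hYcont.continuousAt
  have hG0 : G 0 = π / 2 + r := by
    simp only [hGdef, hY0]
    norm_num
    rw [Complex.arg_real_mul I hr, Complex.arg_I]
  have hGx₀ : G x₀ = 0 := by
    simp only [hGdef, hYx₀]
    norm_num
    exact Complex.arg_ofReal_of_nonneg hx₀0
  -- Step 4: IVT
  have hivt := intermediate_value_Icc' hx₀0 hGcont
  have hθin : θ ∈ Set.Icc (G x₀) (G 0) := by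
    rw [hG0, hGx₀]
    exact ⟨hθ0, by linarith⟩
  obtain ⟨x, hxmem, hGx⟩ := hivt hθin
  -- Step 5: the root
  refine ⟨(x : ℂ) + (Y x : ℝ) * I, ?_, ?_⟩
  · simp [hxmem.1]
  set l : ℂ := (x : ℂ) + (Y x : ℝ) * I with hldef
  have hlre : l.re = x := by simp [hldef]
  have hlim : l.im = Y x := by simp [hldef]
  have hYnn : 0 ≤ r ^ 2 * Real.exp (-(2 * x)) - x ^ 2 := by linarith [hkey x hxmem]
  have habsl : ‖l‖ = r * Real.exp (-x) := by
    rw [hldef, Complex.norm_add_mul_I]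
    rw [hYdef]
    simp only
    rw [Real.sq_sqrt hYnn]
    rw [show x ^ 2 + (r ^ 2 * Real.exp (-(2 * x)) - x ^ 2) = r ^ 2 * Real.exp (-(2 * x)) by ring]
    rw [← hsq, ← mul_pow]
    exact Real.sqrt_sq (by positivity)
  have habs2 : ‖l‖ * Real.exp l.re = r := by
    rw [habsl, hlre, Real.exp_neg]
    field_simp
  have harg : l.arg + l.im = θ := by
    rw [hlim, ← hGx]
  rw [mul_exp_polar l, habs2, harg]

lemma no_rhp_root {b l : ℂ} (hb : b ≠ 0)
    (h : ‖b‖ + π / 2 < |b.arg|)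
    (hroot : l * Complex.exp l = b) : l.re < 0 := by
  by_contra hx
  push_neg at hx
  have hl0 : l ≠ 0 := by
    rintro rfl
    simp at hroot
    exact hb hroot.symm
  have habs : ‖b‖ = ‖l‖ * Real.exp l.re := by
    rw [← hroot, norm_mul, Complex.norm_exp]
  have h1 : ‖l‖ ≤ ‖b‖ := by
    rw [habs]
    nth_rewrite 1 [← mul_one ‖l‖]
    exact mul_le_mul_of_nonneg_left (Real.one_le_exp hx) (norm_nonneg l)
  set φ := l.arg + l.im with hφdef
  have hargl : |l.arg| ≤ π / 2 := Complex.abs_arg_le_pi_div_two_iff.mpr hx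
  have him : |l.im| ≤ ‖l‖ := Complex.abs_im_le_norm l
  have hφ : |φ| ≤ π / 2 + ‖b‖ :=
    (abs_add_le _ _).trans (add_le_add hargl (him.trans h1))
  have hπ : |b.arg| ≤ π := Complex.abs_arg_le_pi b
  have hφπ : |φ| < π := by linarith [abs_nonneg φ]
  have hbarg : b.arg = φ := by
    rw [← hroot, mul_exp_polar l]
    refine arg_polar ?_ ?_
    · exact mul_pos (norm_pos_iff.mpr hl0) (Real.exp_pos _)
    · constructor
      · linarith [neg_abs_le φ]
      · linarith [le_abs_self φ]
  rw [hbarg] at h hπ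
  linarith


lemma exists_rhp_root {b : ℂ} (hb : b ≠ 0) (h : |b.arg| ≤ ‖b‖ + π / 2) :
    ∃ l : ℂ, 0 ≤ l.re ∧ l * Complex.exp l = b := by
  have hr : 0 < ‖b‖ := norm_pos_iff.mpr hb
  have hθπ : |b.arg| ≤ π := Complex.abs_arg_le_pi b
  obtain ⟨l, hl, heq⟩ := exists_rhp_root_polar hr (abs_nonneg _) hθπ h
  rcases le_or_gt 0 b.arg with h0 | h0
  · rw [_root_.abs_of_nonneg h0] at heq
    refine ⟨l, hl, ?_⟩
    rw [heq, Complex.norm_mul_exp_arg_mul_I]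
  · rw [_root_.abs_of_neg h0] at heq
    refine ⟨(starRingEnd ℂ) l, by simpa using hl, ?_⟩
    have : (starRingEnd ℂ) l * Complex.exp ((starRingEnd ℂ) l) =
        (starRingEnd ℂ) (l * Complex.exp l) := by
      rw [map_mul, ← Complex.exp_conj]
    rw [this, heq, map_mul, Complex.conj_ofReal, ← Complex.exp_conj]
    rw [show (starRingEnd ℂ) (((-b.arg : ℝ) : ℂ) * I) = (b.arg : ℂ) * I by
      rw [map_mul, Complex.conj_I, Complex.conj_ofReal]; push_cast; ring]
    rw [Complex.norm_mul_exp_arg_mul_I]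

theorem stmt_15 (τ : ℝ) (η : ℂ) (hτ : 0 < τ) (hη : η ≠ 0) :
    (∀ s : ℂ, s - η * Complex.exp (-s * (τ : ℂ)) = 0 → s.re < 0) ↔
      (η.re < 0 ∧ ‖η‖ < Real.pi / (2 * τ) ∧
        τ * ‖η‖ + Real.pi / 2 < |Complex.arg η|) := by
  have hb0 : ((τ : ℂ)) * η ≠ 0 := by
    apply mul_ne_zero _ hη
    exact_mod_cast hτ.ne'
  have habsb : ‖(τ : ℂ) * η‖ = τ * ‖η‖ := by
    rw [norm_mul, Complex.norm_real, Real.norm_eq_abs, abs_of_pos hτ]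
  have hargb : ((τ : ℂ) * η).arg = η.arg := Complex.arg_real_mul η hτ
  have hηabs : 0 < ‖η‖ := norm_pos_iff.mpr hη
  constructor
  · intro hroots
    by_contra hcon
    -- it suffices to derive the key angle condition; show its failure gives a rhp root
    have hkey : ¬ (τ * ‖η‖ + π / 2 < |η.arg|) := by
      intro hk
      apply hcon
      refine ⟨?_, ?_, hk⟩
      · by_contra hre
        push_neg at hre
        have := Complex.abs_arg_le_pi_div_two_iff.mpr hre
        nlinarith [hηabs]
      · have := Complex.abs_arg_le_pi η
        rw [lt_div_iff₀ (by linarith : (0:ℝ) < 2 * τ)]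
        nlinarith
    push_neg at hkey
    have : |((τ : ℂ) * η).arg| ≤ ‖(τ : ℂ) * η‖ + π / 2 := by
      rw [hargb, habsb]; linarith
    obtain ⟨l, hl, heq⟩ := exists_rhp_root hb0 this
    have hτC : (τ : ℂ) ≠ 0 := by exact_mod_cast hτ.ne'
    have hroot : l / τ - η * Complex.exp (-(l / τ) * τ) = 0 := by
      have h1 : (-(l / (τ : ℂ)) * τ) = -l := by field_simp
      rw [h1]
      have h2 : η * Complex.exp (-l) = l / τ := by
        rw [Complex.exp_neg]
        field_simp
        linear_combination -heq
      rw [h2]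
      ring
    have := hroots _ hroot
    have hre : (l / (τ : ℂ)).re = τ⁻¹ * l.re := by
      rw [div_eq_mul_inv, mul_comm]
      rw [show ((τ : ℂ))⁻¹ = ((τ⁻¹ : ℝ) : ℂ) by push_cast; ring]
      exact Complex.re_ofReal_mul _ _
    rw [hre] at this
    nlinarith [inv_pos.mpr hτ]
  · rintro ⟨-, -, hk⟩ s hs
    have heq : ((τ : ℂ) * s) * Complex.exp ((τ : ℂ) * s) = (τ : ℂ) * η := by
      have h1 : s = η * Complex.exp (-s * τ) := by linear_combination hs
      calc ((τ : ℂ) * s) * Complex.exp ((τ : ℂ) * s)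
          = (τ : ℂ) * (η * Complex.exp (-s * τ)) * Complex.exp ((τ : ℂ) * s) := by
            rw [← h1]
        _ = (τ : ℂ) * η * Complex.exp (-s * τ + (τ : ℂ) * s) := by
            rw [Complex.exp_add]; ring
        _ = (τ : ℂ) * η := by rw [show -s * (τ:ℂ) + (τ:ℂ) * s = 0 by ring, Complex.exp_zero,
              mul_one]
    have hcond : ‖(τ : ℂ) * η‖ + π / 2 < |((τ : ℂ) * η).arg| := by
      rw [hargb, habsb]; linarith
    have := no_rhp_root hb0 hcond heq
    have hre : ((τ : ℂ) * s).re = τ * s.re := Complex.re_ofReal_mul _ _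
    rw [hre] at this
    nlinarith
end

section
/- Let τ > 0, a ∈ ℝ, η ∈ ℂ with |η| < |a| and a < 0. Then every root s of s − a − ηe^{−sτ} = 0 satisfies Re(s) < 0. -/
theorem stmt_16 (τ a : ℝ) (η : ℂ) (hτ : 0 < τ) (ha : a < 0)
    (hη : ‖η‖ < |a|) :
    ∀ s : ℂ, s - (a : ℂ) - η * Complex.exp (-s * (τ : ℂ)) = 0 → s.re < 0 := by
  intro s hs
  by_contra h
  push_neg at h
  have heq : s - (a : ℂ) = η * Complex.exp (-s * (τ : ℂ)) := by
    linear_combination hs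
  have habs : ‖s - (a : ℂ)‖ =
      ‖η‖ * Real.exp (-s.re * τ) := by
    rw [heq, norm_mul, Complex.norm_exp]
    norm_num
  have h1 : Real.exp (-s.re * τ) ≤ 1 := by
    apply Real.exp_le_one_iff.mpr
    nlinarith
  have h2 : ‖s - (a : ℂ)‖ < -a := by
    rw [habs]
    have := abs_of_neg ha
    nlinarith [norm_nonneg η, Real.exp_pos (-s.re * τ)]
  have h3 : -a ≤ ‖s - (a : ℂ)‖ := by
    have := Complex.abs_re_le_norm (s - (a : ℂ))
    simp only [Complex.sub_re, Complex.ofReal_re] at this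
    have : |s.re - a| ≤ ‖s - (a : ℂ)‖ := this
    rw [abs_of_nonneg (by linarith)] at this
    linarith
  linarith
end
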